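/- arXiv:1906.10609 — 2 statements merged into one kernel-verified Lean document; each statement's English description precedes it below -/
import Mathlib

section
/- Let H be a Hilbert space, M, N closed subspaces with M ∩ N = {0} and c₀(M,N) = δ < 1. Then there is a constant C = 1 + δ/(1−δ) such that for all x ∈ M and y ∈ N with ‖x + y‖ ≤ 1 one has ‖x‖ ≤ C. -/
/-!
The cosine `δ = c₀(M, N)` bounds `|⟪x, y⟫| ≤ δ ‖x‖ ‖y‖` on `M × N`. Pairing `x + y` with `x` and
with `y` then gives `‖x‖ ≤ ‖x + y‖ + δ ‖y‖` and `‖y‖ ≤ ‖x + y‖ + δ ‖x‖`; substituting the second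
into the first yields `(1 - δ²) ‖x‖ ≤ (1 + δ) ‖x + y‖`, i.e. `‖x‖ ≤ ‖x + y‖ / (1 - δ)`.
-/

/-- The cosine of the Dixmier angle between two closed subspaces. -/
noncomputable def dixmierC0 {H : Type*} [NormedAddCommGroup H] [InnerProductSpace ℂ H]
    (M N : Submodule ℂ H) : ℝ :=
  sSup {r : ℝ | ∃ x ∈ M, ∃ y ∈ N, ‖x‖ ≤ 1 ∧ ‖y‖ ≤ 1 ∧ r = ‖(inner ℂ x y : ℂ)‖}

open RCLike

section InnerBound

variable {𝕜 E : Type*} [RCLike 𝕜] [NormedAddCommGroup E] [InnerProductSpace 𝕜 E]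

theorem norm_le_norm_add_add_mul_norm_of_norm_inner_le {x y : E} {δ : ℝ} (hδ : 0 ≤ δ)
    (hxy : ‖(inner 𝕜 x y : 𝕜)‖ ≤ δ * (‖x‖ * ‖y‖)) : ‖x‖ ≤ ‖x + y‖ + δ * ‖y‖ := by
  rcases (norm_nonneg x).eq_or_lt with hx | hx
  · rw [← hx]; positivity
  refine le_of_mul_le_mul_left ?_ hx
  have hsplit : ‖x‖ ^ 2 = re (inner 𝕜 x (x + y)) - re (inner 𝕜 x y) := by
    rw [inner_add_right, map_add, inner_self_eq_norm_sq]; ring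
  calc ‖x‖ * ‖x‖ = re (inner 𝕜 x (x + y)) - re (inner 𝕜 x y) := by rw [← hsplit, sq]
    _ ≤ ‖(inner 𝕜 x (x + y) : 𝕜)‖ + ‖(inner 𝕜 x y : 𝕜)‖ := by
        linarith [re_le_norm (inner 𝕜 x (x + y)), neg_abs_le (re (inner 𝕜 x y)),
          abs_re_le_norm (inner 𝕜 x y)]
    _ ≤ ‖x‖ * ‖x + y‖ + δ * (‖x‖ * ‖y‖) := add_le_add (norm_inner_le_norm _ _) hxy
    _ = ‖x‖ * (‖x + y‖ + δ * ‖y‖) := by ring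

theorem one_sub_mul_norm_le_norm_add_of_norm_inner_le {x y : E} {δ : ℝ} (hδ : 0 ≤ δ)
    (hxy : ‖(inner 𝕜 x y : 𝕜)‖ ≤ δ * (‖x‖ * ‖y‖)) :
    (1 - δ) * ‖x‖ ≤ ‖x + y‖ := by
  have hx := norm_le_norm_add_add_mul_norm_of_norm_inner_le (𝕜 := 𝕜) hδ hxy
  have hy : ‖y‖ ≤ ‖x + y‖ + δ * ‖x‖ := by
    rw [add_comm x y]
    refine norm_le_norm_add_add_mul_norm_of_norm_inner_le (𝕜 := 𝕜) hδ ?_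
    rwa [norm_inner_symm, mul_comm ‖y‖]
  have h : (1 + δ) * ((1 - δ) * ‖x‖) ≤ (1 + δ) * ‖x + y‖ := by
    nlinarith [mul_le_mul_of_nonneg_left hy hδ]
  exact le_of_mul_le_mul_left h (by linarith)

end InnerBound

section Dixmier

variable {H : Type*} [NormedAddCommGroup H] [InnerProductSpace ℂ H] {M N : Submodule ℂ H}

theorem bddAbove_dixmierC0_set :
    BddAbove {r : ℝ | ∃ x ∈ M, ∃ y ∈ N, ‖x‖ ≤ 1 ∧ ‖y‖ ≤ 1 ∧ r = ‖(inner ℂ x y : ℂ)‖} := by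
  refine ⟨1, ?_⟩
  rintro r ⟨x, -, y, -, hx, hy, rfl⟩
  calc ‖(inner ℂ x y : ℂ)‖ ≤ ‖x‖ * ‖y‖ := norm_inner_le_norm x y
    _ ≤ 1 := mul_le_one₀ hx (norm_nonneg y) hy

theorem dixmierC0_nonneg : 0 ≤ dixmierC0 M N :=
  le_csSup bddAbove_dixmierC0_set ⟨0, M.zero_mem, 0, N.zero_mem, by simp, by simp, by simp⟩

theorem norm_inner_le_dixmierC0_mul {x y : H} (hx : x ∈ M) (hy : y ∈ N) :
    ‖(inner ℂ x y : ℂ)‖ ≤ dixmierC0 M N * (‖x‖ * ‖y‖) := by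
  rcases eq_or_ne x 0 with rfl | hx0
  · simp
  rcases eq_or_ne y 0 with rfl | hy0
  · simp
  have hpos : 0 < ‖x‖ * ‖y‖ := by positivity
  rw [← div_le_iff₀ hpos]
  refine le_csSup bddAbove_dixmierC0_set
    ⟨(‖x‖⁻¹ : ℂ) • x, M.smul_mem _ hx, (‖y‖⁻¹ : ℂ) • y, N.smul_mem _ hy, ?_, ?_, ?_⟩
  · simp [norm_smul, norm_ne_zero_iff.mpr hx0]
  · simp [norm_smul, norm_ne_zero_iff.mpr hy0]
  · rw [inner_smul_left, inner_smul_right]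
    simp only [div_eq_mul_inv, mul_inv_rev, map_inv₀, Complex.conj_ofReal, Complex.norm_mul,
      norm_inv, Complex.norm_real, norm_norm]
    ring

end Dixmier

theorem stmt_4_general {H : Type*} [NormedAddCommGroup H] [InnerProductSpace ℂ H]
    (M N : Submodule ℂ H) (δ : ℝ) (hδ : dixmierC0 M N = δ) (hδ1 : δ < 1) :
    ∀ x ∈ M, ∀ y ∈ N, ‖x + y‖ ≤ 1 → ‖x‖ ≤ 1 + δ / (1 - δ) := by
  intro x hx y hy hxy
  subst hδ
  have hsub : 0 < 1 - dixmierC0 M N := by linarith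
  have h := one_sub_mul_norm_le_norm_add_of_norm_inner_le (𝕜 := ℂ) dixmierC0_nonneg
    (norm_inner_le_dixmierC0_mul hx hy)
  rw [one_add_div hsub.ne', sub_add_cancel, le_div_iff₀ hsub, mul_comm]
  exact h.trans hxy

/-- Quantitative estimate from the proof of Lemma L07: if `M ∩ N = 0` and
`c₀(M,N) = δ < 1`, then `‖x + y‖ ≤ 1` with `x ∈ M`, `y ∈ N` forces
`‖x‖ ≤ 1 + δ/(1-δ)`. -/
theorem stmt_4 {H : Type*} [NormedAddCommGroup H] [InnerProductSpace ℂ H] [CompleteSpace H]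
    (M N : Submodule ℂ H) (hM : IsClosed (M : Set H)) (hN : IsClosed (N : Set H))
    (hMN : M ⊓ N = ⊥) (δ : ℝ) (hδ : dixmierC0 M N = δ) (hδ1 : δ < 1) :
    ∀ x ∈ M, ∀ y ∈ N, ‖x + y‖ ≤ 1 → ‖x‖ ≤ 1 + δ / (1 - δ) :=
  stmt_4_general M N δ hδ hδ1
end

section
/- Let H be a separable Hilbert space and F a bounded operator on H. Then F is lower semi-Fredholm (Im F closed with finite-dimensional orthogonal complement) if and only if (Im(F − K))^⊥ is finite-dimensional for every compact operator K on H. -/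
/-!
Write `T = F†`. Since `(range (F - K))ᗮ = ker (T - K†)`, the statement is about `T`, and `F` is
lower semi-Fredholm iff `T` is bounded below on `Vᗮ` for some finite-dimensional `V` (open mapping
theorem in one direction, the closed range theorem in the other).

If `T` is bounded below on `Vᗮ` and `K` is compact, then on `ker (T - K†) ⊓ Vᗮ` the compact
operator `K ∘ K†` is bounded below as well, so this subspace is finite-dimensional by Riesz's
theorem, hence so is `ker (T - K†)`. If `T` is not bounded below on any such `Vᗮ`, there is an
orthonormal sequence `e n` with `‖T (e n)‖ < 2⁻ⁿ`; the compact operator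
`K = ∑ rankOne (e n) (T (e n))` has `K† (e n) = T (e n)`, so every `e n` lies in `ker (T - K†)`.
-/

open InnerProductSpace ContinuousLinearMap

section Normed

variable {𝕜 E F : Type*} [NontriviallyNormedField 𝕜] [NormedAddCommGroup E] [NormedSpace 𝕜 E]
  [NormedAddCommGroup F] [NormedSpace 𝕜 F]

theorem antilipschitzWith_comp_subtypeL_of_forall_le_norm (T : E →L[𝕜] F)
    (U : Submodule 𝕜 E) {c : ℝ} (hc : 0 < c) (hU : ∀ x ∈ U, c * ‖x‖ ≤ ‖T x‖) :
    AntilipschitzWith c⁻¹.toNNReal (T ∘L U.subtypeL) :=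
  (T ∘L U.subtypeL).antilipschitz_of_bound fun x => by
    rw [Real.coe_toNNReal _ (inv_nonneg.2 hc.le), le_inv_mul_iff₀ hc]
    exact hU x x.2

theorem isClosed_map_of_forall_le_norm (T : E →L[𝕜] F) (U : Submodule 𝕜 E) [CompleteSpace U]
    {c : ℝ} (hc : 0 < c) (hU : ∀ x ∈ U, c * ‖x‖ ≤ ‖T x‖) :
    IsClosed (U.map (T : E →ₗ[𝕜] F) : Set F) := by
  have := (antilipschitzWith_comp_subtypeL_of_forall_le_norm T U hc hU).isClosed_range
    (T ∘L U.subtypeL).uniformContinuous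
  rwa [coe_comp, Set.range_comp, Submodule.coe_subtypeL, Submodule.coe_subtype,
    Subtype.range_coe] at this

theorem finiteDimensional_of_isCompactOperator_of_forall_le_norm [CompleteSpace 𝕜]
    {S : E →L[𝕜] F} (hS : IsCompactOperator S) (U : Submodule 𝕜 E) [CompleteSpace U] {c : ℝ}
    (hc : 0 < c) (hU : ∀ x ∈ U, c * ‖x‖ ≤ ‖S x‖) : FiniteDimensional 𝕜 U := by
  have hf := (antilipschitzWith_comp_subtypeL_of_forall_le_norm S U hc hU).isClosedEmbedding
    (S ∘L U.subtypeL).uniformContinuous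
  obtain ⟨C, hC, hCf⟩ := hS.comp_clm U.subtypeL
  exact FiniteDimensional.of_isCompactOperator_id ⟨_, hf.isCompact_preimage hC, hCf⟩

end Normed

section InnerProduct

variable {𝕜 E : Type*} [RCLike 𝕜] [NormedAddCommGroup E] [InnerProductSpace 𝕜 E]

theorem isCompactOperator_rankOne {F : Type*} [NormedAddCommGroup F] [NormedSpace 𝕜 F] (x : F)
    (y : E) : IsCompactOperator (rankOne 𝕜 x y) :=
  (isCompactOperator_of_locallyCompactSpace_dom (innerSL 𝕜 y)).clm_comp (toSpanSingleton 𝕜 x)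

theorem Submodule.finiteDimensional_of_finiteDimensional_inf_orthogonal (W V : Submodule 𝕜 E)
    [FiniteDimensional 𝕜 V] (h : FiniteDimensional 𝕜 ↥(W ⊓ Vᗮ)) : FiniteDimensional 𝕜 W := by
  rw [← Submodule.fg_iff_finiteDimensional] at h ⊢
  refine Submodule.fg_of_fg_map_of_fg_inf_ker (V.orthogonalProjectionOnto : E →ₗ[𝕜] V)
    (IsNoetherian.noetherian _) ?_
  rwa [Submodule.ker_orthogonalProjectionOnto]

theorem exists_orthonormal_seq_of_forall_exists_mem_orthogonal {P : ℕ → E → Prop}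
    (h : ∀ n (U : Submodule 𝕜 E), FiniteDimensional 𝕜 U → ∃ x ∈ Uᗮ, ‖x‖ = 1 ∧ P n x) :
    ∃ e : ℕ → E, Orthonormal 𝕜 e ∧ ∀ n, P n (e n) := by
  choose! g hgU hg1 hgP using h
  -- `U n` is the span of the first `n` vectors; the next one is chosen orthogonal to it
  let U : ℕ → Submodule 𝕜 E := fun n =>
    Nat.rec (motive := fun _ => Submodule 𝕜 E) ⊥ (fun k Uk => Uk ⊔ 𝕜 ∙ g k Uk) n
  have hU : ∀ n, FiniteDimensional 𝕜 ↥(U n) := by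
    intro n
    induction n with
    | zero => exact finiteDimensional_bot 𝕜 E
    | succ n ih => exact Submodule.finiteDimensional_sup _ _
  have hmono : Monotone U := monotone_nat_of_le_succ fun n => le_sup_left
  have horth : ∀ m n, m < n → inner 𝕜 (g m (U m)) (g n (U n)) = 0 := fun m n hmn =>
    Submodule.inner_right_of_mem_orthogonal
      (hmono hmn (Submodule.mem_sup_right (Submodule.mem_span_singleton_self _)))
      (hgU n _ (hU n))
  refine ⟨fun n => g n (U n), ⟨fun n => hg1 n _ (hU n), fun m n hmn => ?_⟩,
    fun n => hgP n _ (hU n)⟩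
  rcases hmn.lt_or_gt with hlt | hgt
  · exact horth m n hlt
  · exact inner_eq_zero_symm.1 (horth n m hgt)

namespace ContinuousLinearMap

variable {F : Type*} [NormedAddCommGroup F] [NormedSpace 𝕜 F]

def IsBoundedBelowOnFiniteCodim (T : E →L[𝕜] F) : Prop :=
  ∃ V : Submodule 𝕜 E, FiniteDimensional 𝕜 V ∧ ∃ c > 0, ∀ x ∈ Vᗮ, c * ‖x‖ ≤ ‖T x‖

variable {T : E →L[𝕜] F}

theorem exists_orthonormal_seq_norm_apply_lt_of_not_isBoundedBelowOnFiniteCodim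
    (hT : ¬T.IsBoundedBelowOnFiniteCodim) :
    ∃ e : ℕ → E, Orthonormal 𝕜 e ∧ ∀ n, ‖T (e n)‖ < (1 / 2) ^ n := by
  refine exists_orthonormal_seq_of_forall_exists_mem_orthogonal
    (P := fun n x => ‖T x‖ < (1 / 2) ^ n) fun n U hU => ?_
  simp only [IsBoundedBelowOnFiniteCodim, not_exists, not_and, not_forall, not_le] at hT
  obtain ⟨x, hxU, hx⟩ := hT U hU _ (pow_pos (by norm_num : (0 : ℝ) < 1 / 2) n)
  have hx0 : x ≠ 0 := by
    rintro rfl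
    simp at hx
  refine ⟨(‖x‖⁻¹ : 𝕜) • x, Uᗮ.smul_mem _ hxU, norm_smul_inv_norm hx0, ?_⟩
  rw [map_smul, norm_smul, norm_inv, RCLike.norm_ofReal, abs_norm,
    inv_mul_lt_iff₀ (norm_pos_iff.2 hx0), mul_comm]
  exact hx

end ContinuousLinearMap

end InnerProduct

section Hilbert

variable {𝕜 E F : Type*} [RCLike 𝕜] [NormedAddCommGroup E] [InnerProductSpace 𝕜 E]
  [CompleteSpace E] [NormedAddCommGroup F] [InnerProductSpace 𝕜 F] [CompleteSpace F]

theorem finiteDimensional_of_isCompactOperator_of_forall_le_norm_adjoint {K : E →L[𝕜] F}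
    (hK : IsCompactOperator K) (U : Submodule 𝕜 F) [CompleteSpace U] {c : ℝ} (hc : 0 < c)
    (hU : ∀ x ∈ U, c * ‖x‖ ≤ ‖adjoint K x‖) : FiniteDimensional 𝕜 U := by
  refine finiteDimensional_of_isCompactOperator_of_forall_le_norm (S := K ∘L adjoint K)
    (hK.comp_clm (adjoint K)) U (pow_pos hc 2) fun x hx => ?_
  have hsq : (c * ‖x‖) ^ 2 ≤ ‖(K ∘L adjoint K) x‖ * ‖x‖ := calc
    (c * ‖x‖) ^ 2 ≤ ‖adjoint K x‖ ^ 2 := pow_le_pow_left₀ (by positivity) (hU x hx) 2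
    _ = RCLike.re (inner 𝕜 ((K ∘L adjoint K) x) x) := by
      rw [apply_norm_sq_eq_inner_adjoint_left, adjoint_adjoint]
    _ ≤ ‖(K ∘L adjoint K) x‖ * ‖x‖ := re_inner_le_norm _ _
  rcases (norm_nonneg x).eq_or_lt with hx0 | hxpos
  · rw [← hx0, mul_zero]
    exact norm_nonneg _
  · exact le_of_mul_le_mul_right (by nlinarith) hxpos

theorem exists_isCompactOperator_adjoint_apply_eq {e : ℕ → E} (he : Orthonormal 𝕜 e) {v : ℕ → F}
    (hv : Summable fun n => ‖v n‖) :
    ∃ K : F →L[𝕜] E, IsCompactOperator K ∧ ∀ n, adjoint K (e n) = v n := by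
  have hsum : Summable fun n => rankOne 𝕜 (e n) (v n) :=
    Summable.of_norm (by simpa [norm_rankOne, he.1] using hv)
  refine ⟨∑' n, rankOne 𝕜 (e n) (v n),
    tsum_mem (s := compactOperator (RingHom.id 𝕜) F E) isClosed_setOfPred_isCompactOperator
      fun n => isCompactOperator_rankOne _ _, fun m => ?_⟩
  have hK := (hsum.hasSum.map (adjoint : (F →L[𝕜] E) ≃ₗᵢ⋆[𝕜] (E →L[𝕜] F))
    adjoint.continuous).mapL (apply 𝕜 F (e m))
  refine hK.unique ?_
  convert hasSum_ite_eq m (v m) using 1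
  ext n
  rcases eq_or_ne n m with rfl | hnm <;> simp [orthonormal_iff_ite.1 he, he.1, *]

theorem exists_norm_le_mul_norm_adjoint_apply_of_isClosed_range {T : E →L[𝕜] F}
    (hT : IsClosed (T.range : Set F)) : ∃ c > 0, ∀ y ∈ T.range, ‖y‖ ≤ c * ‖adjoint T y‖ := by
  have : CompleteSpace T.range := hT.completeSpace_coe
  obtain ⟨c, hc, hpre⟩ := (T.codRestrict T.range T.mem_range_self).exists_preimage_norm_le
    (by rintro ⟨_, w, rfl⟩; exact ⟨w, rfl⟩)
  refine ⟨c, hc, fun y hy => ?_⟩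
  obtain ⟨w, hw, hwc⟩ := hpre ⟨y, hy⟩
  replace hw : T w = y := congrArg Subtype.val hw
  have hsq : ‖y‖ ^ 2 ≤ c * ‖adjoint T y‖ * ‖y‖ := calc
    ‖y‖ ^ 2 = RCLike.re (inner 𝕜 w (adjoint T y)) := by
      rw [adjoint_inner_right, hw, ← inner_self_eq_norm_sq (𝕜 := 𝕜)]
    _ ≤ ‖w‖ * ‖adjoint T y‖ := re_inner_le_norm _ _
    _ ≤ c * ‖y‖ * ‖adjoint T y‖ := by gcongr; exact hwc
    _ = c * ‖adjoint T y‖ * ‖y‖ := by ring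
  rcases (norm_nonneg y).eq_or_lt with hy0 | hypos
  · rw [← hy0]
    positivity
  · exact le_of_mul_le_mul_right (by nlinarith) hypos

theorem isClosed_range_adjoint_of_isClosed_range {T : E →L[𝕜] F}
    (hT : IsClosed (T.range : Set F)) : IsClosed ((adjoint T).range : Set E) := by
  have : CompleteSpace T.range := hT.completeSpace_coe
  obtain ⟨c, hc, hTc⟩ := exists_norm_le_mul_norm_adjoint_apply_of_isClosed_range hT
  have hrange : (adjoint T).range = T.range.map (adjoint T : F →ₗ[𝕜] E) := by
    rw [LinearMap.range_eq_map, ← T.range.sup_orthogonal_of_hasOrthogonalProjection,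
      Submodule.map_sup, orthogonal_range, LinearMap.le_ker_iff_map.mp le_rfl, sup_bot_eq]
  rw [hrange]
  refine isClosed_map_of_forall_le_norm _ _ (inv_pos.2 hc) fun y hy => ?_
  rw [inv_mul_le_iff₀ hc]
  exact hTc y hy

namespace ContinuousLinearMap

variable {T : E →L[𝕜] F}

theorem IsBoundedBelowOnFiniteCodim.finiteDimensional_ker_sub_adjoint
    (hT : T.IsBoundedBelowOnFiniteCodim) {K : F →L[𝕜] E} (hK : IsCompactOperator K) :
    FiniteDimensional 𝕜 (T - adjoint K).ker := by
  obtain ⟨V, hV, c, hc, hTV⟩ := hT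
  have : CompleteSpace ↥((T - adjoint K).ker ⊓ Vᗮ) :=
    ((T - adjoint K).isClosed_ker.inter V.isClosed_orthogonal).completeSpace_coe
  refine (T - adjoint K).ker.finiteDimensional_of_finiteDimensional_inf_orthogonal V
    (finiteDimensional_of_isCompactOperator_of_forall_le_norm_adjoint hK _ hc fun x hx => ?_)
  have hTx : T x = adjoint K x := sub_eq_zero.1 hx.1
  exact hTx ▸ hTV x hx.2

theorem IsBoundedBelowOnFiniteCodim.finiteDimensional_ker (hT : T.IsBoundedBelowOnFiniteCodim) :
    FiniteDimensional 𝕜 T.ker := by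
  have := hT.finiteDimensional_ker_sub_adjoint (K := 0) isCompactOperator_zero
  rwa [map_zero, sub_zero] at this

omit [CompleteSpace F] in
theorem IsBoundedBelowOnFiniteCodim.isClosed_range (hT : T.IsBoundedBelowOnFiniteCodim) :
    IsClosed (T.range : Set F) := by
  obtain ⟨V, hV, c, hc, hTV⟩ := hT
  rw [LinearMap.range_eq_map, ← Vᗮ.sup_orthogonal_of_hasOrthogonalProjection,
    V.orthogonal_orthogonal, Submodule.map_sup]
  exact Submodule.isClosed_sup_finiteDimensional _ _ (isClosed_map_of_forall_le_norm T Vᗮ hc hTV)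

theorem exists_isCompactOperator_not_finiteDimensional_ker_sub_adjoint
    (hT : ¬T.IsBoundedBelowOnFiniteCodim) :
    ∃ K : F →L[𝕜] E, IsCompactOperator K ∧ ¬FiniteDimensional 𝕜 (T - adjoint K).ker := by
  obtain ⟨e, he, hTe⟩ := exists_orthonormal_seq_norm_apply_lt_of_not_isBoundedBelowOnFiniteCodim hT
  obtain ⟨K, hK, hKe⟩ := exists_isCompactOperator_adjoint_apply_eq he (v := fun n => T (e n))
    (summable_geometric_two.of_nonneg_of_le (fun _ => norm_nonneg _) fun n => (hTe n).le)
  refine ⟨K, hK, fun hfin => ?_⟩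
  have hmem : ∀ n, e n ∈ (T - adjoint K).ker := fun n => by simp [hKe]
  exact Module.Finite.not_linearIndependent_of_infinite
    (fun n => (⟨e n, hmem n⟩ : (T - adjoint K).ker))
    (LinearIndependent.of_comp (Submodule.subtype _) he.linearIndependent)

theorem isBoundedBelowOnFiniteCodim_iff_forall_isCompactOperator :
    T.IsBoundedBelowOnFiniteCodim ↔
      ∀ K : F →L[𝕜] E, IsCompactOperator K → FiniteDimensional 𝕜 (T - adjoint K).ker :=
  ⟨fun hT _ hK => hT.finiteDimensional_ker_sub_adjoint hK, fun h => by_contra fun hT =>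
    let ⟨K, hK, hker⟩ := exists_isCompactOperator_not_finiteDimensional_ker_sub_adjoint hT
    hker (h K hK)⟩

theorem isBoundedBelowOnFiniteCodim_adjoint_iff :
    (adjoint T).IsBoundedBelowOnFiniteCodim ↔
      IsClosed (T.range : Set F) ∧ FiniteDimensional 𝕜 T.rangeᗮ := by
  refine ⟨fun h => ⟨?_, ?_⟩, fun ⟨hcl, hfd⟩ => ?_⟩
  · simpa using isClosed_range_adjoint_of_isClosed_range h.isClosed_range
  · rw [orthogonal_range]
    exact h.finiteDimensional_ker
  · have : CompleteSpace T.range := hcl.completeSpace_coe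
    obtain ⟨c, hc, hTc⟩ := exists_norm_le_mul_norm_adjoint_apply_of_isClosed_range hcl
    refine ⟨T.rangeᗮ, hfd, c⁻¹, inv_pos.2 hc, fun y hy => ?_⟩
    rw [Submodule.orthogonal_orthogonal] at hy
    rw [inv_mul_le_iff₀ hc]
    exact hTc y hy

end ContinuousLinearMap

end Hilbert

theorem stmt_13_general {H : Type*} [NormedAddCommGroup H] [InnerProductSpace ℂ H] [CompleteSpace H]
    (F : H →L[ℂ] H) :
    (IsClosed ((LinearMap.range (F : H →ₗ[ℂ] H) : Submodule ℂ H) : Set H) ∧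
        FiniteDimensional ℂ ((LinearMap.range (F : H →ₗ[ℂ] H))ᗮ : Submodule ℂ H)) ↔
      ∀ K : H →L[ℂ] H, IsCompactOperator K →
        FiniteDimensional ℂ ((LinearMap.range ((F - K : H →L[ℂ] H) : H →ₗ[ℂ] H))ᗮ : Submodule ℂ H) := by
  rw [← isBoundedBelowOnFiniteCodim_adjoint_iff,
    isBoundedBelowOnFiniteCodim_iff_forall_isCompactOperator]
  refine forall₂_congr fun K _ => ?_
  rw [orthogonal_range, map_sub]

/-- Corollary C03, Hilbert space case: on a separable Hilbert space, `F` is lower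
semi-Fredholm (closed range with finite-dimensional orthogonal complement) iff
`(Im (F - K))ᗮ` is finite-dimensional for every compact operator `K`. -/
theorem stmt_13 {H : Type*} [NormedAddCommGroup H] [InnerProductSpace ℂ H] [CompleteSpace H]
    [TopologicalSpace.SeparableSpace H] (F : H →L[ℂ] H) :
    (IsClosed ((LinearMap.range (F : H →ₗ[ℂ] H) : Submodule ℂ H) : Set H) ∧
        FiniteDimensional ℂ ((LinearMap.range (F : H →ₗ[ℂ] H))ᗮ : Submodule ℂ H)) ↔
      ∀ K : H →L[ℂ] H, IsCompactOperator K →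
        FiniteDimensional ℂ ((LinearMap.range ((F - K : H →L[ℂ] H) : H →ₗ[ℂ] H))ᗮ : Submodule ℂ H) :=
  stmt_13_general F
end
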